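/- arXiv:1306.0124 — 2 statements merged into one kernel-verified Lean document; each statement's English description precedes it below -/
import Mathlib

section
/- Let F = (J,H) : S² × ℝ² → ℝ² be the coupled spin–oscillator. A point q ∈ S² × ℝ² satisfies that the manifold differential (mfderiv) of F at q is the zero linear map (i.e., q is a rank-zero singularity of F) if and only if q = ((0,0,1),(0,0)) or q = ((0,0,-1),(0,0)), i.e., q is the North Pole or the South Pole of the sphere paired with the origin of ℝ². -/
open Metric Manifold
open scoped Manifold

noncomputable section

instance : Fact (Module.finrank ℝ (EuclideanSpace ℝ (Fin 3)) = 2 + 1) :=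
  ⟨by simp [finrank_euclideanSpace_fin]⟩

/-- The phase space of the coupled spin–oscillator: `S² × ℝ²`. -/
abbrev SpinOscSpace : Type :=
  Metric.sphere (0 : EuclideanSpace ℝ (Fin 3)) 1 × EuclideanSpace ℝ (Fin 2)

/-- `J((x,y,z),(u,v)) = (u² + v²)/2 + z`. -/
def spinOscJ (p : SpinOscSpace) : ℝ :=
  ((p.2 0) ^ 2 + (p.2 1) ^ 2) / 2 + (p.1 : EuclideanSpace ℝ (Fin 3)) 2

/-- `H((x,y,z),(u,v)) = (ux + vy)/2`. -/
def spinOscH (p : SpinOscSpace) : ℝ :=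
  (p.2 0 * (p.1 : EuclideanSpace ℝ (Fin 3)) 0 +
    p.2 1 * (p.1 : EuclideanSpace ℝ (Fin 3)) 1) / 2

/-- The coupled spin–oscillator `F = (J, H)`. -/
def spinOscF (p : SpinOscSpace) : ℝ × ℝ := (spinOscJ p, spinOscH p)

/-- The North Pole `(0,0,1)` of the unit sphere in `ℝ³`. -/
def northPole : Metric.sphere (0 : EuclideanSpace ℝ (Fin 3)) 1 :=
  ⟨EuclideanSpace.single 2 (1 : ℝ), by
    simp [mem_sphere_zero_iff_norm, EuclideanSpace.norm_single]⟩

/-- The South Pole `(0,0,-1)` of the unit sphere in `ℝ³`. -/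
def southPole : Metric.sphere (0 : EuclideanSpace ℝ (Fin 3)) 1 :=
  ⟨EuclideanSpace.single 2 (-1 : ℝ), by
    simp [mem_sphere_zero_iff_norm, EuclideanSpace.norm_single]⟩

section Aux

open ContinuousLinearMap

local notation "E3" => EuclideanSpace ℝ (Fin 3)
local notation "E2" => EuclideanSpace ℝ (Fin 2)

/-- ambient extension of the spin-oscillator map -/
def spinG (p : E3 × E2) : ℝ × ℝ :=
  ((1/2) * (p.2 0 * p.2 0 + p.2 1 * p.2 1) + p.1 2,
   (1/2) * (p.2 0 * p.1 0 + p.2 1 * p.1 1))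

/-- inclusion of the phase space in the ambient vector space -/
def inclSO (p : SpinOscSpace) : E3 × E2 := ((p.1 : E3), p.2)

lemma spinOscF_eq : spinOscF = spinG ∘ inclSO := by
  funext p
  simp only [spinOscF, spinOscJ, spinOscH, spinG, inclSO, Function.comp_apply, Prod.mk.injEq]
  constructor <;> ring

-- coordinate continuous linear maps
def cX : (E3 × E2) →L[ℝ] ℝ := (EuclideanSpace.proj (0:Fin 3)).comp (fst ℝ E3 E2)
def cY : (E3 × E2) →L[ℝ] ℝ := (EuclideanSpace.proj (1:Fin 3)).comp (fst ℝ E3 E2)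
def cZ : (E3 × E2) →L[ℝ] ℝ := (EuclideanSpace.proj (2:Fin 3)).comp (fst ℝ E3 E2)
def cU : (E3 × E2) →L[ℝ] ℝ := (EuclideanSpace.proj (0:Fin 2)).comp (snd ℝ E3 E2)
def cV : (E3 × E2) →L[ℝ] ℝ := (EuclideanSpace.proj (1:Fin 2)).comp (snd ℝ E3 E2)

/-- total derivative of the ambient extension -/
def spinDG (p : E3 × E2) : (E3 × E2) →L[ℝ] ℝ × ℝ :=
  (((1:ℝ)/2) • (p.2 0 • cU + p.2 0 • cU + (p.2 1 • cV + p.2 1 • cV)) + cZ).prod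
  ((((1:ℝ)/2)) • (p.2 0 • cX + p.1 0 • cU + (p.2 1 • cY + p.1 1 • cV)))

lemma hasFDerivAt_spinG (p : E3 × E2) : HasFDerivAt spinG (spinDG p) p := by
  have hu : HasFDerivAt (fun p : E3×E2 => p.2 0) cU p := cU.hasFDerivAt
  have hv : HasFDerivAt (fun p : E3×E2 => p.2 1) cV p := cV.hasFDerivAt
  have hx : HasFDerivAt (fun p : E3×E2 => p.1 0) cX p := cX.hasFDerivAt
  have hy : HasFDerivAt (fun p : E3×E2 => p.1 1) cY p := cY.hasFDerivAt
  have hz : HasFDerivAt (fun p : E3×E2 => p.1 2) cZ p := cZ.hasFDerivAt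
  exact ((((hu.mul hu).add (hv.mul hv)).const_mul (1/2)).add hz).prodMk
    (((hu.mul hx).add (hv.mul hy)).const_mul (1/2))

/-- the differential of the inclusion of the sphere -/
def Dcoe (v : Metric.sphere (0:E3) 1) : E2 →L[ℝ] E3 :=
  mfderiv (𝓡 2) 𝓘(ℝ, E3) ((↑) : Metric.sphere (0:E3) 1 → E3) v

lemma mdiff_coe (v : Metric.sphere (0:E3) 1) :
    MDifferentiableAt (𝓡 2) 𝓘(ℝ, E3) ((↑) : Metric.sphere (0:E3) 1 → E3) v :=
  ((contMDiff_coe_sphere (m := 1) v).mdifferentiableAt one_ne_zero)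

lemma mdiff_incl (q : SpinOscSpace) :
    MDifferentiableAt ((𝓡 2).prod (𝓡 2)) 𝓘(ℝ, E3 × E2) inclSO q := by
  rw [mdifferentiableAt_prod_module_iff]
  exact ⟨(mdiff_coe q.1).comp q mdifferentiableAt_fst, mdifferentiableAt_snd⟩

lemma mfderiv_incl (q : SpinOscSpace) :
    mfderiv ((𝓡 2).prod (𝓡 2)) 𝓘(ℝ, E3 × E2) inclSO q =
      ((Dcoe q.1).comp (fst ℝ E2 E2)).prod (snd ℝ E2 E2) := by
  rw [modelWithCornersSelf_prod, ← chartedSpaceSelf_prod]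
  have h1 : MDifferentiableAt ((𝓡 2).prod (𝓡 2)) 𝓘(ℝ, E3)
      (fun p : SpinOscSpace => (p.1 : E3)) q :=
    (mdiff_coe q.1).comp q mdifferentiableAt_fst
  have := h1.mfderiv_prod (mdifferentiableAt_snd (I := 𝓡 2) (I' := 𝓡 2)
    (M := Metric.sphere (0:E3) 1) (x := q))
  rw [show inclSO = (fun p : SpinOscSpace => ((p.1 : E3), p.2)) from rfl]
  rw [this]
  congr 1
  · have : mfderiv ((𝓡 2).prod (𝓡 2)) 𝓘(ℝ, E3)
        (((↑) : Metric.sphere (0:E3) 1 → E3) ∘ Prod.fst) q =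
        (Dcoe q.1).comp (mfderiv ((𝓡 2).prod (𝓡 2)) (𝓡 2) Prod.fst q) :=
      mfderiv_comp q (mdiff_coe q.1) mdifferentiableAt_fst
    rw [show (fun p : SpinOscSpace => (p.1 : E3)) =
      ((↑) : Metric.sphere (0:E3) 1 → E3) ∘ Prod.fst from rfl, this, mfderiv_fst]
    rfl
  · exact mfderiv_snd

lemma mfderiv_spinOscF (q : SpinOscSpace) :
    mfderiv ((𝓡 2).prod (𝓡 2)) 𝓘(ℝ, ℝ × ℝ) spinOscF q =
      (spinDG (inclSO q)).comp
        (((Dcoe q.1).comp (fst ℝ E2 E2)).prod (snd ℝ E2 E2)) := by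
  rw [spinOscF_eq]
  have hG : MDifferentiableAt 𝓘(ℝ, E3 × E2) 𝓘(ℝ, ℝ × ℝ) spinG (inclSO q) :=
    (hasFDerivAt_spinG (inclSO q)).differentiableAt.mdifferentiableAt
  rw [mfderiv_comp q hG (mdiff_incl q), mfderiv_incl]
  congr 1
  rw [mfderiv_eq_fderiv, (hasFDerivAt_spinG (inclSO q)).fderiv]

lemma mfderiv_spinOscF_apply (q : SpinOscSpace) (w : E2 × E2) :
    mfderiv ((𝓡 2).prod (𝓡 2)) 𝓘(ℝ, ℝ × ℝ) spinOscF q w =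
      (Dcoe q.1 w.1 2 + q.2 0 * w.2 0 + q.2 1 * w.2 1,
       (q.2 0 * Dcoe q.1 w.1 0 + q.2 1 * Dcoe q.1 w.1 1
         + (q.1 : E3) 0 * w.2 0 + (q.1 : E3) 1 * w.2 1) / 2) := by
  rw [mfderiv_spinOscF]
  simp only [spinDG, inclSO, cX, cY, cZ, cU, cV]
  have hw : ((Dcoe q.1 ∘SL fst ℝ E2 E2).prod (snd ℝ E2 E2)) w = (Dcoe q.1 w.1, w.2) := rfl
  erw [ContinuousLinearMap.comp_apply (f := ((Dcoe q.1 ∘SL fst ℝ E2 E2).prod (snd ℝ E2 E2))), hw]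
  simp only [ContinuousLinearMap.prod_apply, ContinuousLinearMap.add_apply,
    ContinuousLinearMap.smul_apply, ContinuousLinearMap.comp_apply,
    ContinuousLinearMap.coe_fst', ContinuousLinearMap.coe_snd',
    PiLp.proj_apply, smul_eq_mul]
  refine Prod.ext ?_ ?_ <;> simp only [] <;> ring

lemma Dcoe_apply_two (v : Metric.sphere (0:E3) 1) (c : ℝ) (hc : c ≠ 0)
    (hv : (v : E3) = EuclideanSpace.single 2 c) (a : E2) : Dcoe v a 2 = 0 := by
  have h1 : Dcoe v a ∈ (ℝ ∙ (v : E3))ᗮ := by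
    rw [← range_mfderiv_coe_sphere (n := 2) v]
    exact ⟨a, rfl⟩
  rw [Submodule.mem_orthogonal_singleton_iff_inner_right, hv,
    EuclideanSpace.inner_single_left] at h1
  simpa [hc] using h1

end Aux

/-- A point `q ∈ S² × ℝ²` is a rank-zero singularity of the coupled
spin–oscillator `F = (J,H)` (i.e. the manifold differential of `F` at `q` is the zero
linear map) if and only if `q` is the North Pole or the South Pole paired with the
origin of `ℝ²`. -/
theorem spinOsc_mfderiv_eq_zero_iff (q : SpinOscSpace) :
    mfderiv ((𝓡 2).prod (𝓡 2)) 𝓘(ℝ, ℝ × ℝ) spinOscF q = 0 ↔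
      q = (northPole, 0) ∨ q = (southPole, 0) := by
  constructor
  · intro h
    have key : ∀ w : EuclideanSpace ℝ (Fin 2) × EuclideanSpace ℝ (Fin 2),
        (Dcoe q.1 w.1 2 + q.2 0 * w.2 0 + q.2 1 * w.2 1,
          (q.2 0 * Dcoe q.1 w.1 0 + q.2 1 * Dcoe q.1 w.1 1
            + (q.1 : EuclideanSpace ℝ (Fin 3)) 0 * w.2 0
            + (q.1 : EuclideanSpace ℝ (Fin 3)) 1 * w.2 1) / 2) = (0 : ℝ × ℝ) := by
      intro w
      rw [← mfderiv_spinOscF_apply q w, h]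
      rfl
    have k0 := key (0, EuclideanSpace.single 0 1)
    have k1 := key (0, EuclideanSpace.single 1 1)
    simp only [Prod.mk_eq_zero, map_zero, EuclideanSpace.single_apply] at k0 k1
    norm_num at k0 k1
    obtain ⟨hu, hx⟩ := k0
    obtain ⟨hv, hy⟩ := k1
    have hq2 : q.2 = 0 := by
      ext i
      fin_cases i
      · exact hu
      · exact hv
    have hn : ‖(q.1 : EuclideanSpace ℝ (Fin 3))‖ = 1 :=
      mem_sphere_zero_iff_norm.1 q.1.2
    rw [EuclideanSpace.norm_eq] at hn
    rw [Fin.sum_univ_three, hx, hy] at hn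
    simp only [norm_zero, Real.norm_eq_abs] at hn
    rw [show (0:ℝ)^2 + 0^2 + |(q.1 : EuclideanSpace ℝ (Fin 3)) 2|^2
        = |(q.1 : EuclideanSpace ℝ (Fin 3)) 2|^2 by ring, Real.sqrt_sq (abs_nonneg _)] at hn
    rcases (abs_eq (by norm_num : (0:ℝ) ≤ 1)).1 hn with hz | hz
    · left
      refine Prod.ext ?_ hq2
      refine Subtype.ext ?_
      show (q.1 : EuclideanSpace ℝ (Fin 3)) = (northPole : EuclideanSpace ℝ (Fin 3))
      ext i
      fin_cases i <;>
        simp [northPole, EuclideanSpace.single_apply, hx, hy, hz]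
    · right
      refine Prod.ext ?_ hq2
      refine Subtype.ext ?_
      show (q.1 : EuclideanSpace ℝ (Fin 3)) = (southPole : EuclideanSpace ℝ (Fin 3))
      ext i
      fin_cases i <;>
        simp [southPole, EuclideanSpace.single_apply, hx, hy, hz]
  · intro h
    have hpole : ∀ c : ℝ, c ≠ 0 →
        ∀ v : Metric.sphere (0 : EuclideanSpace ℝ (Fin 3)) 1,
        (v : EuclideanSpace ℝ (Fin 3)) = EuclideanSpace.single 2 c →
        mfderiv ((𝓡 2).prod (𝓡 2)) 𝓘(ℝ, ℝ × ℝ) spinOscF (v, 0) = 0 := by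
      intro c hc v hv
      apply ContinuousLinearMap.ext
      intro w
      rw [mfderiv_spinOscF_apply (v, 0) w]
      have h2 : Dcoe v w.1 2 = 0 := Dcoe_apply_two v c hc hv w.1
      have hx : (v : EuclideanSpace ℝ (Fin 3)) 0 = 0 := by
        rw [hv]; simp [EuclideanSpace.single_apply]
      have hy : (v : EuclideanSpace ℝ (Fin 3)) 1 = 0 := by
        rw [hv]; simp [EuclideanSpace.single_apply]
      simp [h2, hx, hy]
      rfl
    rcases h with rfl | rfl
    · exact hpole 1 one_ne_zero northPole rfl
    · exact hpole (-1) (by norm_num) southPole rfl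

end
end

section
/- Let F = (J,H) : S² × ℝ² → ℝ² be the coupled spin–oscillator. The set of points p ∈ S² × ℝ² at which the manifold differentials (mfderiv) of J and of H at p are linearly independent linear functionals on the tangent space is dense in S² × ℝ². In particular, the singularities of F (points where the differential of F has rank less than 2) form a set with empty interior. -/
open Metric Manifold
open scoped Manifold

noncomputable section

/-- The manifold differential of `J` at `p`, as a linear functional on the tangent
space. -/
def dJ (p : SpinOscSpace) :
    TangentSpace ((𝓡 2).prod (𝓡 2)) p →L[ℝ] ℝ :=
  mfderiv ((𝓡 2).prod (𝓡 2)) 𝓘(ℝ, ℝ) spinOscJ p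

/-- The manifold differential of `H` at `p`, as a linear functional on the tangent
space. -/
def dH (p : SpinOscSpace) :
    TangentSpace ((𝓡 2).prod (𝓡 2)) p →L[ℝ] ℝ :=
  mfderiv ((𝓡 2).prod (𝓡 2)) 𝓘(ℝ, ℝ) spinOscH p

lemma smooth_coord3 (i : Fin 3) :
    ContMDiff ((𝓡 2).prod (𝓡 2)) 𝓘(ℝ, ℝ) ⊤
      (fun p : SpinOscSpace => (p.1 : EuclideanSpace ℝ (Fin 3)) i) :=
  ((EuclideanSpace.proj i : EuclideanSpace ℝ (Fin 3) →L[ℝ] ℝ)).contMDiff.comp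
    (contMDiff_coe_sphere.comp contMDiff_fst)

lemma smooth_coord2 (i : Fin 2) :
    ContMDiff ((𝓡 2).prod (𝓡 2)) 𝓘(ℝ, ℝ) ⊤
      (fun p : SpinOscSpace => p.2 i) :=
  ((EuclideanSpace.proj i : EuclideanSpace ℝ (Fin 2) →L[ℝ] ℝ)).contMDiff.comp contMDiff_snd

lemma smooth_spinOscJ : ContMDiff ((𝓡 2).prod (𝓡 2)) 𝓘(ℝ, ℝ) ⊤ spinOscJ := by
  have : spinOscJ = fun p : SpinOscSpace =>
      (p.2 0 * p.2 0 + p.2 1 * p.2 1) / 2 + (p.1 : EuclideanSpace ℝ (Fin 3)) 2 := by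
    funext p; simp [spinOscJ]; ring
  rw [this]
  exact ((((smooth_coord2 0).mul (smooth_coord2 0)).add
    ((smooth_coord2 1).mul (smooth_coord2 1))).div_const 2).add (smooth_coord3 2)

lemma smooth_spinOscH : ContMDiff ((𝓡 2).prod (𝓡 2)) 𝓘(ℝ, ℝ) ⊤ spinOscH :=
  (((smooth_coord2 0).mul (smooth_coord3 0)).add
    ((smooth_coord2 1).mul (smooth_coord3 1))).div_const 2


/-- vertical inclusion -/
def vert (p : SpinOscSpace) : EuclideanSpace ℝ (Fin 2) → SpinOscSpace := fun w => (p.1, w)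

lemma mdiff_vert (p : SpinOscSpace) :
    MDifferentiableAt 𝓘(ℝ, EuclideanSpace ℝ (Fin 2)) ((𝓡 2).prod (𝓡 2)) (vert p) p.2 :=
  (mdifferentiableAt_const).prodMk mdifferentiableAt_id

lemma dJ_vert (p : SpinOscSpace) (w : EuclideanSpace ℝ (Fin 2)) :
    dJ p (mfderiv 𝓘(ℝ, EuclideanSpace ℝ (Fin 2)) ((𝓡 2).prod (𝓡 2)) (vert p) p.2 w)
      = p.2 0 * w 0 + p.2 1 * w 1 := by
  have hcomp := mfderiv_comp p.2
    ((smooth_spinOscJ (vert p p.2)).mdifferentiableAt (by simp)) (mdiff_vert p)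
  have e0 : HasFDerivAt (fun w : EuclideanSpace ℝ (Fin 2) => w 0)
      (EuclideanSpace.proj 0 : EuclideanSpace ℝ (Fin 2) →L[ℝ] ℝ) p.2 :=
    (EuclideanSpace.proj 0 : EuclideanSpace ℝ (Fin 2) →L[ℝ] ℝ).hasFDerivAt
  have e1 : HasFDerivAt (fun w : EuclideanSpace ℝ (Fin 2) => w 1)
      (EuclideanSpace.proj 1 : EuclideanSpace ℝ (Fin 2) →L[ℝ] ℝ) p.2 :=
    (EuclideanSpace.proj 1 : EuclideanSpace ℝ (Fin 2) →L[ℝ] ℝ).hasFDerivAt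
  have h1 : spinOscJ ∘ vert p = fun w : EuclideanSpace ℝ (Fin 2) =>
      ((1:ℝ)/2) * (w 0 * w 0) + ((1:ℝ)/2) * (w 1 * w 1)
        + (p.1 : EuclideanSpace ℝ (Fin 3)) 2 := by
    funext w
    simp only [Function.comp_apply, vert, spinOscJ]
    ring
  have h2 := ((((e0.mul e0).const_mul ((1:ℝ)/2)).add
    ((e1.mul e1).const_mul ((1:ℝ)/2))).add_const ((p.1 : EuclideanSpace ℝ (Fin 3)) 2))
  calc dJ p (mfderiv 𝓘(ℝ, EuclideanSpace ℝ (Fin 2)) ((𝓡 2).prod (𝓡 2)) (vert p) p.2 w)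
      = @id ℝ (mfderiv 𝓘(ℝ, EuclideanSpace ℝ (Fin 2)) 𝓘(ℝ, ℝ) (spinOscJ ∘ vert p) p.2 w) := by
        rw [hcomp]; rfl
    _ = fderiv ℝ (spinOscJ ∘ vert p) p.2 w := by rw [mfderiv_eq_fderiv]; rfl
    _ = p.2 0 * w 0 + p.2 1 * w 1 := by
        rw [h1]; erw [h2.fderiv]
        simp [smul_eq_mul]
        ring

lemma dH_vert (p : SpinOscSpace) (w : EuclideanSpace ℝ (Fin 2)) :
    dH p (mfderiv 𝓘(ℝ, EuclideanSpace ℝ (Fin 2)) ((𝓡 2).prod (𝓡 2)) (vert p) p.2 w)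
      = (w 0 * (p.1 : EuclideanSpace ℝ (Fin 3)) 0
          + w 1 * (p.1 : EuclideanSpace ℝ (Fin 3)) 1) / 2 := by
  have hcomp := mfderiv_comp p.2
    ((smooth_spinOscH (vert p p.2)).mdifferentiableAt (by simp)) (mdiff_vert p)
  have e0 : HasFDerivAt (fun w : EuclideanSpace ℝ (Fin 2) => w 0)
      (EuclideanSpace.proj 0 : EuclideanSpace ℝ (Fin 2) →L[ℝ] ℝ) p.2 :=
    (EuclideanSpace.proj 0 : EuclideanSpace ℝ (Fin 2) →L[ℝ] ℝ).hasFDerivAt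
  have e1 : HasFDerivAt (fun w : EuclideanSpace ℝ (Fin 2) => w 1)
      (EuclideanSpace.proj 1 : EuclideanSpace ℝ (Fin 2) →L[ℝ] ℝ) p.2 :=
    (EuclideanSpace.proj 1 : EuclideanSpace ℝ (Fin 2) →L[ℝ] ℝ).hasFDerivAt
  have h1 : spinOscH ∘ vert p = fun w : EuclideanSpace ℝ (Fin 2) =>
      ((p.1 : EuclideanSpace ℝ (Fin 3)) 0 / 2) * w 0
        + ((p.1 : EuclideanSpace ℝ (Fin 3)) 1 / 2) * w 1 := by
    funext w
    simp only [Function.comp_apply, vert, spinOscH]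
    ring
  have h2 := ((e0.const_mul ((p.1 : EuclideanSpace ℝ (Fin 3)) 0 / 2)).add
    (e1.const_mul ((p.1 : EuclideanSpace ℝ (Fin 3)) 1 / 2)))
  calc dH p (mfderiv 𝓘(ℝ, EuclideanSpace ℝ (Fin 2)) ((𝓡 2).prod (𝓡 2)) (vert p) p.2 w)
      = @id ℝ (mfderiv 𝓘(ℝ, EuclideanSpace ℝ (Fin 2)) 𝓘(ℝ, ℝ) (spinOscH ∘ vert p) p.2 w) := by
        rw [hcomp]; rfl
    _ = fderiv ℝ (spinOscH ∘ vert p) p.2 w := by rw [mfderiv_eq_fderiv]; rfl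
    _ = (w 0 * (p.1 : EuclideanSpace ℝ (Fin 3)) 0
          + w 1 * (p.1 : EuclideanSpace ℝ (Fin 3)) 1) / 2 := by
        rw [h1]; erw [h2.fderiv]
        simp [smul_eq_mul]
        ring


abbrev e0 : EuclideanSpace ℝ (Fin 2) := EuclideanSpace.single 0 1
abbrev e1 : EuclideanSpace ℝ (Fin 2) := EuclideanSpace.single 1 1

lemma indep_of_det (p : SpinOscSpace)
    (h : p.2 0 * (p.1 : EuclideanSpace ℝ (Fin 3)) 1
        - p.2 1 * (p.1 : EuclideanSpace ℝ (Fin 3)) 0 ≠ 0) :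
    LinearIndependent ℝ ![dJ p, dH p] := by
  set x := (p.1 : EuclideanSpace ℝ (Fin 3)) 0
  set y := (p.1 : EuclideanSpace ℝ (Fin 3)) 1
  set u := p.2 0
  set v := p.2 1
  rw [LinearIndependent.pair_iff]
  intro s t hst
  have key : ∀ w : EuclideanSpace ℝ (Fin 2),
      s * (u * w 0 + v * w 1) + t * ((w 0 * x + w 1 * y) / 2) = 0 := by
    intro w
    have := congrArg (fun L : TangentSpace ((𝓡 2).prod (𝓡 2)) p →L[ℝ] ℝ =>
      L (mfderiv 𝓘(ℝ, EuclideanSpace ℝ (Fin 2)) ((𝓡 2).prod (𝓡 2)) (vert p) p.2 w)) hst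
    have h2 : s * dJ p (mfderiv 𝓘(ℝ, EuclideanSpace ℝ (Fin 2)) ((𝓡 2).prod (𝓡 2)) (vert p) p.2 w)
        + t * dH p (mfderiv 𝓘(ℝ, EuclideanSpace ℝ (Fin 2)) ((𝓡 2).prod (𝓡 2)) (vert p) p.2 w)
        = 0 := this
    rw [dJ_vert, dH_vert] at h2
    exact h2
  have k0 := key e0
  have k1 := key e1
  simp [EuclideanSpace.single_apply] at k0 k1
  have hs : s = 0 := by
    have : s * (u * y - v * x) = 0 := by linear_combination y * k0 - x * k1
    rcases mul_eq_zero.1 this with h' | h'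
    · exact h'
    · exact absurd h' h
  have ht : t = 0 := by
    have : t * (u * y - v * x) = 0 := by linear_combination 2 * u * k1 - 2 * v * k0
    rcases mul_eq_zero.1 this with h' | h'
    · exact h'
    · exact absurd h' h
  exact ⟨hs, ht⟩


lemma mfderiv_F (p : SpinOscSpace) :
    mfderiv ((𝓡 2).prod (𝓡 2)) 𝓘(ℝ, ℝ × ℝ) spinOscF p = (dJ p).prod (dH p) := by
  rw [modelWithCornersSelf_prod, ← chartedSpaceSelf_prod]
  exact ((smooth_spinOscJ p).mdifferentiableAt (by simp)).mfderiv_prod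
    ((smooth_spinOscH p).mdifferentiableAt (by simp))

lemma not_rank_lt (p : SpinOscSpace) (hp : LinearIndependent ℝ ![dJ p, dH p]) :
    ¬ LinearMap.rank
        (mfderiv ((𝓡 2).prod (𝓡 2)) 𝓘(ℝ, ℝ × ℝ) spinOscF p :
            TangentSpace ((𝓡 2).prod (𝓡 2)) p →L[ℝ] ℝ × ℝ).toLinearMap < 2 := by
  intro hlt
  rw [mfderiv_F] at hlt
  set f := ((dJ p).prod (dH p)).toLinearMap with hf
  have hne : LinearMap.range f ≠ ⊤ := by
    intro htop
    change Module.rank ℝ (LinearMap.range f) < 2 at hlt; rw [htop] at hlt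
    rw [rank_top] at hlt
    have hlt2 : Module.rank ℝ (ℝ × ℝ) < 2 := hlt
    rw [rank_prod', Module.rank_self] at hlt2
    norm_num at hlt2
  obtain ⟨φ, hφ0, hφ⟩ := (LinearMap.range f).exists_dual_map_eq_bot_of_lt_top
    (lt_top_iff_ne_top.2 hne) inferInstance
  have hker : ∀ q : TangentSpace ((𝓡 2).prod (𝓡 2)) p, φ (f q) = 0 := by
    intro q
    have : φ (f q) ∈ Submodule.map φ (LinearMap.range f) :=
      Submodule.mem_map_of_mem (LinearMap.mem_range_self f q)
    rw [hφ] at this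
    simpa using this
  set a := φ (1, 0)
  set b := φ (0, 1)
  have hφeval : ∀ st : ℝ × ℝ, φ st = st.1 * a + st.2 * b := by
    intro ⟨s', t'⟩
    have h' : ((s' : ℝ), (t' : ℝ)) = s' • ((1:ℝ), (0:ℝ)) + t' • ((0:ℝ), (1:ℝ)) := by
      simp [Prod.ext_iff]
    conv_lhs => rw [h']
    rw [map_add, map_smul, map_smul]
    simp [a, b, smul_eq_mul]
  have hdep : a • dJ p + b • dH p = 0 := by
    ext q
    have := hker q
    rw [hφeval (f q)] at this
    simpa [hf, mul_comm] using this
  obtain ⟨ha, hb⟩ := LinearIndependent.pair_iff.1 hp a b hdep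
  apply hφ0
  apply LinearMap.ext
  intro st
  rw [hφeval st, ha, hb]
  simp


set_option maxHeartbeats 1000000 in
lemma sphere_perturb (s : Metric.sphere (0 : EuclideanSpace ℝ (Fin 3)) 1) (δ : ℝ)
    (hδ : 0 < δ) :
    ∃ s' : Metric.sphere (0 : EuclideanSpace ℝ (Fin 3)) 1,
      dist s' s < δ ∧ ((s' : EuclideanSpace ℝ (Fin 3)) 0 ≠ 0 ∨
        (s' : EuclideanSpace ℝ (Fin 3)) 1 ≠ 0) := by
  by_cases hx : (s : EuclideanSpace ℝ (Fin 3)) 0 ≠ 0 ∨ (s : EuclideanSpace ℝ (Fin 3)) 1 ≠ 0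
  · exact ⟨s, by simpa using hδ, hx⟩
  push_neg at hx
  obtain ⟨hx0, hx1⟩ := hx
  set z := (s : EuclideanSpace ℝ (Fin 3)) 2 with hzdef
  have hnorm : ‖(s : EuclideanSpace ℝ (Fin 3))‖ = 1 := by
    have := s.2
    simpa [mem_sphere_zero_iff_norm] using this
  have hz2 : z ^ 2 = 1 := by
    rw [EuclideanSpace.norm_eq, Fin.sum_univ_three] at hnorm
    rw [hx0, hx1] at hnorm
    have : Real.sqrt (z ^ 2) = 1 := by
      simpa [Real.norm_eq_abs, sq_abs] using hnorm
    nlinarith [Real.sq_sqrt (sq_nonneg z), this]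
  set a : ℝ := min (δ / 2) (1 / 2) with ha
  have ha0 : 0 < a := by positivity
  have ha1 : a ≤ 1 / 2 := min_le_right _ _
  have haδ : a ≤ δ / 2 := min_le_left _ _
  have ha2 : (0:ℝ) ≤ 1 - a ^ 2 := by nlinarith
  have hsq : Real.sqrt (1 - a ^ 2) ^ 2 = 1 - a ^ 2 := Real.sq_sqrt ha2
  set v : EuclideanSpace ℝ (Fin 3) :=
    (WithLp.equiv 2 _).symm ![a, 0, z * Real.sqrt (1 - a ^ 2)] with hv
  have hv0 : v 0 = a := rfl
  have hv1 : v 1 = 0 := rfl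
  have hv2 : v 2 = z * Real.sqrt (1 - a ^ 2) := rfl
  have hvnorm : ‖v‖ = 1 := by
    rw [EuclideanSpace.norm_eq, Fin.sum_univ_three, hv0, hv1, hv2]
    have : ‖a‖ ^ 2 + ‖(0:ℝ)‖ ^ 2 + ‖z * Real.sqrt (1 - a ^ 2)‖ ^ 2 = 1 := by
      simp only [Real.norm_eq_abs, sq_abs]
      nlinarith [hsq, hz2]
    rw [this, Real.sqrt_one]
  refine ⟨⟨v, by rwa [mem_sphere_zero_iff_norm]⟩, ?_, Or.inl (by show v 0 ≠ 0; rw [hv0]; exact ne_of_gt ha0)⟩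
  have hsqrt_ge : 1 - a ≤ Real.sqrt (1 - a ^ 2) := by
    have h1 : ((1 - a) ^ 2 : ℝ) ≤ 1 - a ^ 2 := by nlinarith
    calc (1 - a : ℝ) = Real.sqrt ((1 - a) ^ 2) := (Real.sqrt_sq (by linarith)).symm
      _ ≤ Real.sqrt (1 - a ^ 2) := Real.sqrt_le_sqrt h1
  have hsqrt_le : Real.sqrt (1 - a ^ 2) ≤ 1 := by
    have h' := Real.sqrt_le_sqrt (show (1 : ℝ) - a ^ 2 ≤ 1 by nlinarith)
    rwa [Real.sqrt_one] at h'
  have hdist : dist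
      ((⟨v, by rwa [mem_sphere_zero_iff_norm]⟩ : Metric.sphere (0 : EuclideanSpace ℝ (Fin 3)) 1)) s
      = dist v (s : EuclideanSpace ℝ (Fin 3)) := rfl
  rw [hdist, EuclideanSpace.dist_eq, Fin.sum_univ_three]
  rw [Real.sqrt_lt' hδ]
  have d0 : dist (v 0) ((s : EuclideanSpace ℝ (Fin 3)) 0) = a := by
    rw [hv0, hx0, Real.dist_eq, sub_zero, abs_of_pos ha0]
  have d1 : dist (v 1) ((s : EuclideanSpace ℝ (Fin 3)) 1) = 0 := by
    rw [hv1, hx1, Real.dist_eq, sub_zero, abs_zero]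
  have d2 : dist (v 2) ((s : EuclideanSpace ℝ (Fin 3)) 2) ^ 2 ≤ a ^ 2 := by
    rw [hv2, Real.dist_eq]
    have : |z * Real.sqrt (1 - a ^ 2) - z| ^ 2 = (Real.sqrt (1 - a ^ 2) - 1) ^ 2 := by
      rw [sq_abs]
      nlinarith [hz2]
    rw [this]
    nlinarith [hsqrt_ge, hsqrt_le]
  rw [d0, d1]
  nlinarith [d2, ha0, hδ]

lemma plane_perturb (x y : ℝ) (hxy : x ≠ 0 ∨ y ≠ 0) (w : EuclideanSpace ℝ (Fin 2))
    (δ : ℝ) (hδ : 0 < δ) :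
    ∃ w' : EuclideanSpace ℝ (Fin 2), dist w' w < δ ∧ w' 0 * y - w' 1 * x ≠ 0 := by
  by_cases h0 : w 0 * y - w 1 * x ≠ 0
  · exact ⟨w, by simpa using hδ, h0⟩
  push_neg at h0
  have hsq : 0 < x ^ 2 + y ^ 2 := by
    rcases hxy with h | h
    · positivity
    · positivity
  have hden : (0:ℝ) < |x| + |y| + 1 := by positivity
  set t : ℝ := δ / (2 * (|x| + |y| + 1)) with ht
  have htpos : 0 < t := by positivity
  set n : EuclideanSpace ℝ (Fin 2) := (WithLp.equiv 2 _).symm ![y, -x] with hn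
  have hn0 : n 0 = y := rfl
  have hn1 : n 1 = -x := rfl
  refine ⟨w + t • n, ?_, ?_⟩
  · have hdist : dist (w + t • n) w = t * ‖n‖ := by
      rw [dist_eq_norm, add_sub_cancel_left, norm_smul, Real.norm_eq_abs, abs_of_pos htpos]
    have hnn : ‖n‖ ≤ |x| + |y| := by
      rw [EuclideanSpace.norm_eq, Fin.sum_univ_two, hn0, hn1]
      have h1 : ‖y‖ ^ 2 + ‖-x‖ ^ 2 ≤ (|x| + |y|) ^ 2 := by
        simp only [Real.norm_eq_abs, abs_neg, sq_abs]
        nlinarith [abs_nonneg x, abs_nonneg y, sq_abs x, sq_abs y,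
          mul_nonneg (abs_nonneg x) (abs_nonneg y)]
      calc Real.sqrt (‖y‖ ^ 2 + ‖-x‖ ^ 2) ≤ Real.sqrt ((|x| + |y|) ^ 2) :=
            Real.sqrt_le_sqrt h1
        _ = |x| + |y| := Real.sqrt_sq (by positivity)
    rw [hdist]
    calc t * ‖n‖ ≤ t * (|x| + |y|) := by
          exact mul_le_mul_of_nonneg_left hnn htpos.le
      _ < t * (2 * (|x| + |y| + 1)) := by
          apply mul_lt_mul_of_pos_left _ htpos
          nlinarith [abs_nonneg x, abs_nonneg y]
      _ = δ := by rw [ht]; exact div_mul_cancel₀ _ (by positivity)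
  · have e0 : (w + t • n) 0 = w 0 + t * y := by
      simp [hn0, PiLp.add_apply, PiLp.smul_apply, smul_eq_mul]
    have e1 : (w + t • n) 1 = w 1 + t * (-x) := by
      simp [hn1, PiLp.add_apply, PiLp.smul_apply, smul_eq_mul]
    rw [e0, e1]
    have : (w 0 + t * y) * y - (w 1 + t * -x) * x = t * (x ^ 2 + y ^ 2) := by
      linear_combination h0
    rw [this]
    positivity

lemma dense_det : Dense {p : SpinOscSpace |
    p.2 0 * (p.1 : EuclideanSpace ℝ (Fin 3)) 1
      - p.2 1 * (p.1 : EuclideanSpace ℝ (Fin 3)) 0 ≠ 0} := by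
  rw [Metric.dense_iff]
  intro p ε hε
  obtain ⟨s', hs', hcoord⟩ := sphere_perturb p.1 (ε / 2) (by positivity)
  obtain ⟨w', hw', hval⟩ := plane_perturb ((s' : EuclideanSpace ℝ (Fin 3)) 0)
    ((s' : EuclideanSpace ℝ (Fin 3)) 1) hcoord p.2 (ε / 2) (by positivity)
  refine ⟨((s', w') : SpinOscSpace), Metric.mem_ball.2 ?_, hval⟩
  rw [Prod.dist_eq]
  exact max_lt (lt_of_lt_of_le hs' (by linarith)) (lt_of_lt_of_le hw' (by linarith))

/-- The set of points of `S² × ℝ²` at which the differentials of `J`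
and of `H` are linearly independent linear functionals on the tangent space is dense;
in particular the set of singularities of `F = (J,H)` (points where the differential
of `F` has rank less than `2`) has empty interior. -/
theorem spinOsc_almost_everywhere_independent :
    Dense {p : SpinOscSpace | LinearIndependent ℝ ![dJ p, dH p]} ∧
    interior {p : SpinOscSpace |
      LinearMap.rank
        (mfderiv ((𝓡 2).prod (𝓡 2)) 𝓘(ℝ, ℝ × ℝ) spinOscF p :
            TangentSpace ((𝓡 2).prod (𝓡 2)) p →L[ℝ] ℝ × ℝ).toLinearMap < 2} = ∅ := by
  have hdense : Dense {p : SpinOscSpace | LinearIndependent ℝ ![dJ p, dH p]} :=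
    dense_det.mono (fun p hp => indep_of_det p hp)
  refine ⟨hdense, ?_⟩
  have hsub : {p : SpinOscSpace |
      LinearMap.rank
        (mfderiv ((𝓡 2).prod (𝓡 2)) 𝓘(ℝ, ℝ × ℝ) spinOscF p :
            TangentSpace ((𝓡 2).prod (𝓡 2)) p →L[ℝ] ℝ × ℝ).toLinearMap < 2}
      ⊆ {p : SpinOscSpace | LinearIndependent ℝ ![dJ p, dH p]}ᶜ :=
    fun p hp hind => not_rank_lt p hind hp
  have h2 := interior_mono hsub
  rwa [interior_compl, hdense.closure_eq, Set.compl_univ, Set.subset_empty_iff] at h2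

end
end
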